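/- Let (X, μ) be a measure space, let A > 0, and let a : X → ℝ be measurable with 0 ≤ a(x) ≤ A for all x. Let 0 < r < 1, p₀ > 2, m̃, M̃ > 0, and let g : ℝ → ℝ be a measurable function satisfying m̃ |s|^{r+1} ≤ g(s)·s ≤ M̃ |s|^{r+1} for all |s| ≥ 1. Let D₀ > 0 and let v : X → ℝ be measurable with (∫_X |v|^{p₀} dμ)^{1/p₀} ≤ D₀, and set E = { x ∈ X : |v(x)| > 1 }. Then there is a constant C > 0, depending only on m̃, M̃, A, r and p₀, such that ∫_E a(x) ( v(x)² + g(v(x))² ) dμ ≤ C · D₀^{p₀(1−r)/(p₀−r−1)} · ( ∫_E a(x) g(v(x)) v(x) dμ )^{(p₀−2)/(p₀−1−r)}. -/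

import Mathlib

/-!
On `E = {x | 1 < |v x|}` the growth condition gives `g(v)² ≤ M g(v) v` (because `r ≤ 1`) and
`m |v|^(r+1) ≤ g(v) v ≤ M |v|^p₀`. With `θ = (p₀ - 2) / (p₀ - 1 - r)` one has
`2 = θ (r + 1) + (1 - θ) p₀`, so Hölder's inequality interpolates the weighted second moment:
`∫_E a v² ≤ (∫_E a |v|^(r+1))^θ (∫_E a |v|^p₀)^(1-θ)`, where the first factor is at most
`(m⁻¹ I)^θ` for `I = ∫_E a g(v) v` and the second at most `(A D₀^p₀)^(1-θ)`. The remaining term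
`M I = M I^θ I^(1-θ)` is bounded in the same way using `I ≤ M A D₀^p₀`.
-/

open MeasureTheory

section Interpolation

variable {α : Type*} [MeasurableSpace α] {μ : Measure α}

theorem integral_rpow_mul_rpow_le {f g : α → ℝ} (hf0 : 0 ≤ᵐ[μ] f) (hg0 : 0 ≤ᵐ[μ] g)
    (hf : Integrable f μ) (hg : Integrable g μ) {θ : ℝ} (hθ0 : 0 ≤ θ) (hθ1 : θ ≤ 1) :
    ∫ x, f x ^ θ * g x ^ (1 - θ) ∂μ ≤ (∫ x, f x ∂μ) ^ θ * (∫ x, g x ∂μ) ^ (1 - θ) := by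
  have hθ1' : 0 ≤ 1 - θ := sub_nonneg.2 hθ1
  have hfg0 : 0 ≤ᵐ[μ] fun x ↦ f x ^ θ * g x ^ (1 - θ) := by
    filter_upwards [hf0, hg0] with x hfx hgx
    exact mul_nonneg (Real.rpow_nonneg hfx _) (Real.rpow_nonneg hgx _)
  have hfg : AEStronglyMeasurable (fun x ↦ f x ^ θ * g x ^ (1 - θ)) μ :=
    ((hf.1.aemeasurable.pow_const θ).mul (hg.1.aemeasurable.pow_const _)).aestronglyMeasurable
  rw [integral_eq_lintegral_of_nonneg_ae hfg0 hfg, integral_eq_lintegral_of_nonneg_ae hf0 hf.1,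
    integral_eq_lintegral_of_nonneg_ae hg0 hg.1, ENNReal.toReal_rpow, ENNReal.toReal_rpow,
    ← ENNReal.toReal_mul]
  refine ENNReal.toReal_mono (ENNReal.mul_ne_top
    (ENNReal.rpow_ne_top_of_nonneg hθ0 hf.lintegral_lt_top.ne)
    (ENNReal.rpow_ne_top_of_nonneg hθ1' hg.lintegral_lt_top.ne)) ?_
  calc ∫⁻ x, ENNReal.ofReal (f x ^ θ * g x ^ (1 - θ)) ∂μ
      = ∫⁻ x, ENNReal.ofReal (f x) ^ θ * ENNReal.ofReal (g x) ^ (1 - θ) ∂μ := by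
        refine lintegral_congr_ae ?_
        filter_upwards [hf0, hg0] with x hfx hgx
        rw [ENNReal.ofReal_mul (Real.rpow_nonneg hfx _), ENNReal.ofReal_rpow_of_nonneg hfx hθ0,
          ENNReal.ofReal_rpow_of_nonneg hgx hθ1']
    _ ≤ _ := ENNReal.lintegral_mul_norm_pow_le hf.1.aemeasurable.ennreal_ofReal
        hg.1.aemeasurable.ennreal_ofReal hθ0 hθ1' (by ring)

theorem integral_mul_rpow_interpolate_le {w u : α → ℝ} (hw : 0 ≤ᵐ[μ] w) (hu : 0 ≤ᵐ[μ] u)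
    {s t θ : ℝ} (hθ0 : 0 ≤ θ) (hθ1 : θ ≤ 1) (hst : θ * s + (1 - θ) * t ≠ 0)
    (hs : Integrable (fun x ↦ w x * u x ^ s) μ) (ht : Integrable (fun x ↦ w x * u x ^ t) μ) :
    ∫ x, w x * u x ^ (θ * s + (1 - θ) * t) ∂μ ≤
      (∫ x, w x * u x ^ s ∂μ) ^ θ * (∫ x, w x * u x ^ t ∂μ) ^ (1 - θ) := by
  refine le_of_eq_of_le (integral_congr_ae ?_) (integral_rpow_mul_rpow_le ?_ ?_ hs ht hθ0 hθ1)
  · filter_upwards [hw, hu] with x hwx hux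
    have hw1 : w x = w x ^ θ * w x ^ (1 - θ) := by
      rw [← Real.rpow_add' hwx (by simp), add_sub_cancel, Real.rpow_one]
    rw [Real.mul_rpow hwx (Real.rpow_nonneg hux _), Real.mul_rpow hwx (Real.rpow_nonneg hux _),
      ← Real.rpow_mul hux, ← Real.rpow_mul hux, Real.rpow_add' hux hst, mul_comm s, mul_comm t]
    nth_rewrite 1 [hw1]
    ring
  all_goals filter_upwards [hw, hu] with x hwx hux
  all_goals exact mul_nonneg hwx (Real.rpow_nonneg hux _)

end Interpolation

theorem sq_le_mul_of_mul_le_rpow {y s M r : ℝ} (hr : r ≤ 1) (hs : 1 ≤ |s|) (hM : 0 ≤ M)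
    (hys0 : 0 ≤ y * s) (hys : y * s ≤ M * |s| ^ (r + 1)) : y ^ 2 ≤ M * (y * s) := by
  have hs2 : 0 < s ^ 2 := by rw [← sq_abs]; positivity
  have hsr : |s| ^ (r + 1) ≤ s ^ 2 := by
    calc |s| ^ (r + 1) ≤ |s| ^ (2 : ℝ) := Real.rpow_le_rpow_of_exponent_le hs (by linarith)
      _ = s ^ 2 := by rw [Real.rpow_two, sq_abs]
  refine le_of_mul_le_mul_right ?_ hs2
  calc y ^ 2 * s ^ 2 = (y * s) * (y * s) := by ring
    _ ≤ (y * s) * (M * s ^ 2) := mul_le_mul_of_nonneg_left (hys.trans (by gcongr)) hys0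
    _ = M * (y * s) * s ^ 2 := by ring

theorem rpow_mul_rpow_add_mul_le {θ m M I J H B : ℝ} (hθ0 : 0 ≤ θ) (hθ1 : θ ≤ 1) (hm : 0 < m)
    (hM : 0 ≤ M) (hJ : 0 ≤ J) (hH : 0 ≤ H) (hmJ : m * J ≤ I) (hIH : I ≤ M * H) (hHB : H ≤ B) :
    J ^ θ * H ^ (1 - θ) + M * I ≤ ((m⁻¹) ^ θ + M * M ^ (1 - θ)) * B ^ (1 - θ) * I ^ θ := by
  have hI : 0 ≤ I := (mul_nonneg hm.le hJ).trans hmJ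
  have hθ1' : 0 ≤ 1 - θ := sub_nonneg.2 hθ1
  have hJI : J ^ θ ≤ (m⁻¹) ^ θ * I ^ θ := by
    rw [← Real.mul_rpow (inv_nonneg.2 hm.le) hI]
    exact Real.rpow_le_rpow hJ ((le_inv_mul_iff₀ hm).2 hmJ) hθ0
  have hIB : I ^ (1 - θ) ≤ M ^ (1 - θ) * B ^ (1 - θ) := by
    rw [← Real.mul_rpow hM (hH.trans hHB)]
    exact Real.rpow_le_rpow hI (hIH.trans (mul_le_mul_of_nonneg_left hHB hM)) hθ1'
  have hI_eq : I = I ^ θ * I ^ (1 - θ) := by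
    rw [← Real.rpow_add' hI (by simp), add_sub_cancel, Real.rpow_one]
  calc J ^ θ * H ^ (1 - θ) + M * I = J ^ θ * H ^ (1 - θ) + M * (I ^ θ * I ^ (1 - θ)) := by
        rw [← hI_eq]
    _ ≤ (m⁻¹) ^ θ * I ^ θ * B ^ (1 - θ) + M * (I ^ θ * (M ^ (1 - θ) * B ^ (1 - θ))) := by
        gcongr
    _ = ((m⁻¹) ^ θ + M * M ^ (1 - θ)) * B ^ (1 - θ) * I ^ θ := by ring

section DampingIntegrals

variable {X : Type*} [MeasurableSpace X] {μ : Measure X} {a v : X → ℝ} {g : ℝ → ℝ} {A p m M r : ℝ}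

theorem integrableOn_mul_rpow_of_le {q : ℝ} (hqp : q ≤ p) (ha : Measurable a)
    (ha0 : ∀ x, 0 ≤ a x) (haA : ∀ x, a x ≤ A) (hv : Measurable v)
    (hvp : Integrable (fun x ↦ |v x| ^ p) μ) :
    IntegrableOn (fun x ↦ a x * |v x| ^ q) {x | 1 < |v x|} μ := by
  refine (hvp.const_mul A).integrableOn.mono' (ha.mul (hv.abs.pow_const q)).aestronglyMeasurable
    (ae_restrict_of_forall_mem (measurableSet_lt measurable_const hv.abs) fun x hx ↦ ?_)
  rw [Real.norm_eq_abs, abs_of_nonneg (mul_nonneg (ha0 x) (Real.rpow_nonneg (abs_nonneg _) _))]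
  exact mul_le_mul (haA x) (Real.rpow_le_rpow_of_exponent_le (le_of_lt hx) hqp)
    (Real.rpow_nonneg (abs_nonneg _) _) ((ha0 x).trans (haA x))

theorem setIntegral_mul_rpow_le (hp : 0 < p) (hA : 0 ≤ A) (ha : Measurable a) (ha0 : ∀ x, 0 ≤ a x)
    (haA : ∀ x, a x ≤ A) (hv : Measurable v) (hvp : Integrable (fun x ↦ |v x| ^ p) μ)
    {D : ℝ} (hvD : (∫ x, |v x| ^ p ∂μ) ^ (1 / p) ≤ D) :
    ∫ x in {x | 1 < |v x|}, a x * |v x| ^ p ∂μ ≤ A * D ^ p := by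
  have hvp0 : 0 ≤ ∫ x, |v x| ^ p ∂μ := integral_nonneg fun x ↦ Real.rpow_nonneg (abs_nonneg _) _
  calc ∫ x in {x | 1 < |v x|}, a x * |v x| ^ p ∂μ ≤ ∫ x in {x | 1 < |v x|}, A * |v x| ^ p ∂μ :=
        setIntegral_mono_on (integrableOn_mul_rpow_of_le le_rfl ha ha0 haA hv hvp)
          (hvp.const_mul A).integrableOn (measurableSet_lt measurable_const hv.abs)
          fun x _ ↦ mul_le_mul_of_nonneg_right (haA x) (Real.rpow_nonneg (abs_nonneg _) _)
    _ ≤ ∫ x, A * |v x| ^ p ∂μ := setIntegral_le_integral (hvp.const_mul A)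
        (ae_of_all _ fun x ↦ mul_nonneg hA (Real.rpow_nonneg (abs_nonneg _) _))
    _ ≤ A * D ^ p := by
        rw [integral_const_mul]
        exact mul_le_mul_of_nonneg_left
          ((Real.rpow_inv_le_iff_of_pos hvp0 ((Real.rpow_nonneg hvp0 _).trans hvD) hp).1
            (by rwa [← one_div])) hA

theorem integrableOn_mul_comp_mul (hm : 0 ≤ m) (hrp : r + 1 ≤ p) (ha : Measurable a)
    (ha0 : ∀ x, 0 ≤ a x) (haA : ∀ x, a x ≤ A) (hg : Measurable g)
    (hgr : ∀ s : ℝ, 1 ≤ |s| → m * |s| ^ (r + 1) ≤ g s * s ∧ g s * s ≤ M * |s| ^ (r + 1))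
    (hv : Measurable v) (hvp : Integrable (fun x ↦ |v x| ^ p) μ) :
    IntegrableOn (fun x ↦ a x * (g (v x) * v x)) {x | 1 < |v x|} μ := by
  refine ((integrableOn_mul_rpow_of_le hrp ha ha0 haA hv hvp).const_mul M).mono'
    (ha.mul ((hg.comp hv).mul hv)).aestronglyMeasurable
    (ae_restrict_of_forall_mem (measurableSet_lt measurable_const hv.abs) fun x hx ↦ ?_)
  obtain ⟨hlo, hhi⟩ := hgr (v x) (le_of_lt hx)
  have hgv : 0 ≤ g (v x) * v x := (by positivity : 0 ≤ m * |v x| ^ (r + 1)).trans hlo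
  rw [Real.norm_eq_abs, abs_of_nonneg (mul_nonneg (ha0 x) hgv), mul_left_comm M]
  exact mul_le_mul_of_nonneg_left hhi (ha0 x)

theorem mul_setIntegral_rpow_le_setIntegral_mul_comp_mul (hm : 0 ≤ m) (hrp : r + 1 ≤ p)
    (ha : Measurable a) (ha0 : ∀ x, 0 ≤ a x) (haA : ∀ x, a x ≤ A) (hg : Measurable g)
    (hgr : ∀ s : ℝ, 1 ≤ |s| → m * |s| ^ (r + 1) ≤ g s * s ∧ g s * s ≤ M * |s| ^ (r + 1))
    (hv : Measurable v) (hvp : Integrable (fun x ↦ |v x| ^ p) μ) :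
    m * ∫ x in {x | 1 < |v x|}, a x * |v x| ^ (r + 1) ∂μ ≤
      ∫ x in {x | 1 < |v x|}, a x * (g (v x) * v x) ∂μ := by
  rw [← integral_const_mul]
  refine setIntegral_mono_on ((integrableOn_mul_rpow_of_le hrp ha ha0 haA hv hvp).const_mul m)
    (integrableOn_mul_comp_mul hm hrp ha ha0 haA hg hgr hv hvp)
    (measurableSet_lt measurable_const hv.abs) fun x hx ↦ ?_
  rw [mul_left_comm m]
  exact mul_le_mul_of_nonneg_left (hgr (v x) (le_of_lt hx)).1 (ha0 x)

theorem setIntegral_mul_comp_mul_le (hm : 0 ≤ m) (hM : 0 ≤ M) (hrp : r + 1 ≤ p)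
    (ha : Measurable a) (ha0 : ∀ x, 0 ≤ a x) (haA : ∀ x, a x ≤ A) (hg : Measurable g)
    (hgr : ∀ s : ℝ, 1 ≤ |s| → m * |s| ^ (r + 1) ≤ g s * s ∧ g s * s ≤ M * |s| ^ (r + 1))
    (hv : Measurable v) (hvp : Integrable (fun x ↦ |v x| ^ p) μ) :
    ∫ x in {x | 1 < |v x|}, a x * (g (v x) * v x) ∂μ ≤
      M * ∫ x in {x | 1 < |v x|}, a x * |v x| ^ p ∂μ := by
  rw [← integral_const_mul]
  refine setIntegral_mono_on (integrableOn_mul_comp_mul hm hrp ha ha0 haA hg hgr hv hvp)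
    ((integrableOn_mul_rpow_of_le le_rfl ha ha0 haA hv hvp).const_mul M)
    (measurableSet_lt measurable_const hv.abs) fun x hx ↦ ?_
  rw [mul_left_comm M]
  refine mul_le_mul_of_nonneg_left ((hgr (v x) (le_of_lt hx)).2.trans ?_) (ha0 x)
  exact mul_le_mul_of_nonneg_left (Real.rpow_le_rpow_of_exponent_le (le_of_lt hx) hrp) hM

theorem setIntegral_mul_sq_add_sq_le (hm : 0 ≤ m) (hM : 0 ≤ M) (hr : r ≤ 1)
    (hp : 2 ≤ p) (ha : Measurable a) (ha0 : ∀ x, 0 ≤ a x) (haA : ∀ x, a x ≤ A) (hg : Measurable g)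
    (hgr : ∀ s : ℝ, 1 ≤ |s| → m * |s| ^ (r + 1) ≤ g s * s ∧ g s * s ≤ M * |s| ^ (r + 1))
    (hv : Measurable v) (hvp : Integrable (fun x ↦ |v x| ^ p) μ) :
    ∫ x in {x | 1 < |v x|}, a x * (v x ^ 2 + g (v x) ^ 2) ∂μ ≤
      ∫ x in {x | 1 < |v x|}, a x * |v x| ^ (2 : ℝ) ∂μ +
        M * ∫ x in {x | 1 < |v x|}, a x * (g (v x) * v x) ∂μ := by
  have h2 := integrableOn_mul_rpow_of_le hp ha ha0 haA hv hvp
  have hI := (integrableOn_mul_comp_mul hm (by linarith) ha ha0 haA hg hgr hv hvp).const_mul M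
  rw [← integral_const_mul, ← integral_add h2 hI]
  refine integral_mono_of_nonneg (ae_of_all _ fun x ↦ mul_nonneg (ha0 x) (by positivity))
    (h2.add hI) (ae_restrict_of_forall_mem (measurableSet_lt measurable_const hv.abs) fun x hx ↦ ?_)
  obtain ⟨hlo, hhi⟩ := hgr (v x) (le_of_lt hx)
  have hgv : 0 ≤ g (v x) * v x := (by positivity : 0 ≤ m * |v x| ^ (r + 1)).trans hlo
  have hg2 := sq_le_mul_of_mul_le_rpow hr (le_of_lt hx) hM hgv hhi
  simp only [Real.rpow_two, sq_abs]
  linarith [mul_le_mul_of_nonneg_left hg2 (ha0 x)]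

end DampingIntegrals

theorem stmt_17_general (m M A r p₀ : ℝ)
    (hm : 0 < m) (hM : 0 < M) (hA : 0 < A) (hr1 : r < 1) (hp₀ : 2 < p₀) :
    ∃ C : ℝ, 0 < C ∧
      ∀ (X : Type*) [MeasurableSpace X] (μ : Measure X)
        (a : X → ℝ), Measurable a → (∀ x, 0 ≤ a x) → (∀ x, a x ≤ A) →
      ∀ g : ℝ → ℝ, Measurable g →
        (∀ s : ℝ, 1 ≤ |s| → m * |s| ^ (r + 1) ≤ g s * s ∧ g s * s ≤ M * |s| ^ (r + 1)) →
      ∀ D₀ : ℝ, 0 < D₀ →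
      ∀ v : X → ℝ, Measurable v → Integrable (fun x => |v x| ^ p₀) μ →
        (∫ x, |v x| ^ p₀ ∂μ) ^ (1 / p₀) ≤ D₀ →
      (∫ x in {x | 1 < |v x|}, a x * ((v x) ^ 2 + (g (v x)) ^ 2) ∂μ) ≤
        C * D₀ ^ (p₀ * (1 - r) / (p₀ - r - 1)) *
          (∫ x in {x | 1 < |v x|}, a x * (g (v x) * v x) ∂μ)
            ^ ((p₀ - 2) / (p₀ - 1 - r)) := by
  set θ := (p₀ - 2) / (p₀ - 1 - r) with hθ
  have hβ : 0 < p₀ - 1 - r := by linarith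
  have hθ0 : 0 ≤ θ := div_nonneg (by linarith) hβ.le
  have hθ1 : θ ≤ 1 := (div_le_one hβ).2 (by linarith)
  have hθ2 : θ * (r + 1) + (1 - θ) * p₀ = 2 := by rw [hθ]; field_simp; ring
  have hexp : p₀ * (1 - r) / (p₀ - r - 1) = p₀ * (1 - θ) := by
    have : p₀ - r - 1 ≠ 0 := by linarith
    rw [hθ]; field_simp; ring
  refine ⟨((m⁻¹) ^ θ + M * M ^ (1 - θ)) * A ^ (1 - θ), by positivity, ?_⟩
  intro X _ μ a ha ha0 haA g hg hgr D₀ hD₀ v hv hvp hvD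
  have hrp : r + 1 ≤ p₀ := by linarith
  have hE : MeasurableSet {x | 1 < |v x|} := measurableSet_lt measurable_const hv.abs
  calc _ ≤ ∫ x in {x | 1 < |v x|}, a x * |v x| ^ (θ * (r + 1) + (1 - θ) * p₀) ∂μ +
        M * ∫ x in {x | 1 < |v x|}, a x * (g (v x) * v x) ∂μ := by
        rw [hθ2]
        exact setIntegral_mul_sq_add_sq_le hm.le hM.le hr1.le hp₀.le ha ha0 haA hg hgr hv hvp
    _ ≤ (∫ x in {x | 1 < |v x|}, a x * |v x| ^ (r + 1) ∂μ) ^ θ *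
          (∫ x in {x | 1 < |v x|}, a x * |v x| ^ p₀ ∂μ) ^ (1 - θ) +
        M * ∫ x in {x | 1 < |v x|}, a x * (g (v x) * v x) ∂μ := by
        gcongr
        exact integral_mul_rpow_interpolate_le (ae_of_all _ ha0) (ae_of_all _ fun x ↦ abs_nonneg _)
          hθ0 hθ1 (by rw [hθ2]; norm_num) (integrableOn_mul_rpow_of_le hrp ha ha0 haA hv hvp)
          (integrableOn_mul_rpow_of_le le_rfl ha ha0 haA hv hvp)
    _ ≤ ((m⁻¹) ^ θ + M * M ^ (1 - θ)) * (A * D₀ ^ p₀) ^ (1 - θ) *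
          (∫ x in {x | 1 < |v x|}, a x * (g (v x) * v x) ∂μ) ^ θ :=
        rpow_mul_rpow_add_mul_le hθ0 hθ1 hm hM.le
          (setIntegral_nonneg hE fun x _ ↦ mul_nonneg (ha0 x) (Real.rpow_nonneg (abs_nonneg _) _))
          (setIntegral_nonneg hE fun x _ ↦ mul_nonneg (ha0 x) (Real.rpow_nonneg (abs_nonneg _) _))
          (mul_setIntegral_rpow_le_setIntegral_mul_comp_mul hm.le hrp ha ha0 haA hg hgr hv hvp)
          (setIntegral_mul_comp_mul_le hm.le hM.le hrp ha ha0 haA hg hgr hv hvp)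
          (setIntegral_mul_rpow_le (by linarith) hA.le ha ha0 haA hv hvp hvD)
    _ = _ := by
        rw [hexp, Real.mul_rpow hA.le (by positivity), ← Real.rpow_mul hD₀.le]
        ring

/-- (Sublinear damping at infinity.)  Let `0 < r < 1`, `p₀ > 2`,
`m, M, A > 0`.  There is a constant `C > 0`, depending only on `m, M, A, r, p₀`,
such that for every measure space `(X, μ)`, every measurable `a : X → ℝ` with
`0 ≤ a ≤ A`, every measurable `g : ℝ → ℝ` with `m|s|^{r+1} ≤ g(s)s ≤ M|s|^{r+1}` for
`|s| ≥ 1`, every `D₀ > 0` and every measurable `v ∈ L^{p₀}(μ)` with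
`‖v‖_{L^{p₀}} ≤ D₀`, setting `E = {x : |v x| > 1}`, one has
`∫_E a (v² + g(v)²) dμ ≤ C · D₀^{p₀(1−r)/(p₀−r−1)} · (∫_E a g(v) v dμ)^{(p₀−2)/(p₀−1−r)}`. -/
theorem stmt_17 (m M A r p₀ : ℝ)
    (hm : 0 < m) (hM : 0 < M) (hA : 0 < A) (hr0 : 0 < r) (hr1 : r < 1) (hp₀ : 2 < p₀) :
    ∃ C : ℝ, 0 < C ∧
      ∀ (X : Type*) [MeasurableSpace X] (μ : Measure X)
        (a : X → ℝ), Measurable a → (∀ x, 0 ≤ a x) → (∀ x, a x ≤ A) →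
      ∀ g : ℝ → ℝ, Measurable g →
        (∀ s : ℝ, 1 ≤ |s| → m * |s| ^ (r + 1) ≤ g s * s ∧ g s * s ≤ M * |s| ^ (r + 1)) →
      ∀ D₀ : ℝ, 0 < D₀ →
      ∀ v : X → ℝ, Measurable v → Integrable (fun x => |v x| ^ p₀) μ →
        (∫ x, |v x| ^ p₀ ∂μ) ^ (1 / p₀) ≤ D₀ →
      (∫ x in {x | 1 < |v x|}, a x * ((v x) ^ 2 + (g (v x)) ^ 2) ∂μ) ≤
        C * D₀ ^ (p₀ * (1 - r) / (p₀ - r - 1)) *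
          (∫ x in {x | 1 < |v x|}, a x * (g (v x) * v x) ∂μ)
            ^ ((p₀ - 2) / (p₀ - 1 - r)) :=
  stmt_17_general m M A r p₀ hm hM hA hr1 hp₀
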